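/- For every integer n ≥ 1 and every integer i with 0 ≤ i ≤ n, the Boros-Moll coefficients satisfy d_i(n+1) = ((8n^2 + 8n + 3 − 4i^2)/(2(n+1−i)(n+1))) · d_i(n) − ((n+i)(4n−1)(4n+1)/(4n(n+1)(n+1−i))) · d_i(n−1), where d_j(m) is taken to be 0 whenever j < 0 or j > m. -/

import Mathlib

/-!
Put `c(n, j) = 2^j C(2n-2j, n-j) C(n+j, j)`, so that `4^n P_n(x) = S_n(x + 1)` with
`S_n(y) = ∑_j c(n, j) y^j`. The ratios `c(n, j+1) / c(n, j)` and `c(n+1, j+1) / c(n, j)` are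
rational in `n` and `j`; read on coefficients, they become two first-order differential-difference
equations for `S_n`, hence for `P_n`:
`2(n+1) P_{n+1} = (2(n+1)x + 4n + 3) P_n + 2x(x+1) P_n'` and
`(16n² - 1) P_{n-1} = 2n(4n + 1 - 2nx) P_n + 4n x(x-1) P_n'`.
At `x^i` each of them involves only `d_{i-1}(n)` besides `d_i` at two consecutive levels, and
eliminating `d_{i-1}(n)` between them gives the recurrence.
-/

open Polynomial

/-- The Boros-Moll polynomial `P_n(x)`. -/
noncomputable def borosMoll (n : ℕ) : Polynomial ℝ :=
  ((2 : ℝ) ^ (2 * n))⁻¹ • ∑ j ∈ Finset.range (n + 1),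
    Polynomial.C ((2 : ℝ) ^ j * (Nat.choose (2 * n - 2 * j) (n - j) : ℝ) *
      (Nat.choose (n + j) j : ℝ)) * (Polynomial.X + 1) ^ j

/-- The coefficients `d_i(n)`, with the convention `d_i(n) = 0` for `i < 0` or `i > n`. -/
noncomputable def bmCoeff (i : ℤ) (n : ℕ) : ℝ :=
  if 0 ≤ i then (borosMoll n).coeff i.toNat else 0

/-- The polynomial `Q_n(x) = ∑ d_i(n)/i! x^i`. -/
noncomputable def Q (n : ℕ) : Polynomial ℝ :=
  ∑ i ∈ Finset.range (n + 1),
    Polynomial.C ((borosMoll n).coeff i / (Nat.factorial i : ℝ)) * Polynomial.X ^ i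

/-- The polynomial `R_n(x) = ∑ d_i(n)/(i+2)! x^i`. -/
noncomputable def R (n : ℕ) : Polynomial ℝ :=
  ∑ i ∈ Finset.range (n + 1),
    Polynomial.C ((borosMoll n).coeff i / (Nat.factorial (i + 2) : ℝ)) * Polynomial.X ^ i

/-- A real polynomial has only real zeros: every complex root is real. -/
def RealRooted (p : Polynomial ℝ) : Prop :=
  ∀ z : ℂ, Polynomial.aeval z p = 0 → z.im = 0

/-- `g` strictly interlaces `f`: `deg f = deg g + 1`, the zeros
`r_1 ≥ ⋯ ≥ r_{m+1}` of `f` and `s_1 ≥ ⋯ ≥ s_m` of `g` satisfy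
`r_{i+1} ≤ s_i ≤ r_i`, and `f, g` have no common zeros. -/
def StrictlyInterlaces (g f : Polynomial ℝ) : Prop :=
  f.natDegree = g.natDegree + 1 ∧
  ∃ (s : Fin g.natDegree → ℝ) (r : Fin (g.natDegree + 1) → ℝ),
    Antitone s ∧ Antitone r ∧
    g.roots = Multiset.map s Finset.univ.val ∧
    f.roots = Multiset.map r Finset.univ.val ∧
    (∀ i : Fin g.natDegree, r i.succ ≤ s i ∧ s i ≤ r i.castSucc) ∧
    ∀ x : ℝ, ¬ (g.IsRoot x ∧ f.IsRoot x)

namespace Polynomial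

variable {A : Type*}

theorem coeff_X_mul_derivative [CommSemiring A] (p : A[X]) (k : ℕ) :
    (X * derivative p).coeff k = k * p.coeff k := by
  cases k with
  | zero => simp
  | succ k => rw [coeff_X_mul, coeff_derivative, mul_comm]; push_cast; ring

theorem coeff_X_mul_X_mul_derivative [CommRing A] (p : A[X]) (k : ℕ) :
    (X * (X * derivative p)).coeff k = ((k : A) - 1) * (X * p).coeff k := by
  cases k with
  | zero => simp
  | succ k => rw [coeff_X_mul, coeff_X_mul, coeff_X_mul_derivative]; push_cast; ring

end Polynomial

noncomputable def shiftedBorosMoll (n : ℕ) : ℝ[X] :=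
  ∑ j ∈ Finset.range (n + 1),
    C ((2 : ℝ) ^ j * (Nat.choose (2 * n - 2 * j) (n - j) : ℝ) * (Nat.choose (n + j) j : ℝ)) *
      X ^ j

theorem coeff_shiftedBorosMoll (n j : ℕ) : (shiftedBorosMoll n).coeff j =
    if j ≤ n then
      (2 : ℝ) ^ j * (Nat.choose (2 * n - 2 * j) (n - j) : ℝ) * (Nat.choose (n + j) j : ℝ)
    else 0 := by
  rw [shiftedBorosMoll, finsetSum_coeff]
  simp only [coeff_C_mul_X_pow, Finset.sum_ite_eq, Finset.mem_range, Nat.lt_succ_iff]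

theorem shiftedBorosMoll_comp_X_add_one (n : ℕ) :
    (shiftedBorosMoll n).comp (X + 1) = C ((4 : ℝ) ^ n) * borosMoll n := by
  rw [borosMoll, smul_eq_C_mul, ← mul_assoc, ← C_mul,
    show (4 : ℝ) ^ n * ((2 : ℝ) ^ (2 * n))⁻¹ = 1 by rw [pow_mul]; norm_num, C_1, one_mul,
    shiftedBorosMoll]
  simp [sum_comp]

theorem coeff_zero_shiftedBorosMoll (n : ℕ) : (shiftedBorosMoll n).coeff 0 = n.centralBinom := by
  simp [coeff_shiftedBorosMoll, Nat.centralBinom_eq_two_mul_choose]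

theorem coeff_zero_shiftedBorosMoll_succ (n : ℕ) :
    ((n : ℝ) + 1) * (shiftedBorosMoll (n + 1)).coeff 0
      = 2 * (2 * n + 1) * (shiftedBorosMoll n).coeff 0 := by
  rw [coeff_zero_shiftedBorosMoll, coeff_zero_shiftedBorosMoll]
  exact_mod_cast Nat.succ_mul_centralBinom_succ n

theorem coeff_succ_shiftedBorosMoll_succ (n j : ℕ) :
    ((j : ℝ) + 1) * (n + 1) * (shiftedBorosMoll (n + 1)).coeff (j + 1)
      = 2 * (n + j + 1) * (n + j + 2) * (shiftedBorosMoll n).coeff j := by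
  rw [coeff_shiftedBorosMoll, coeff_shiftedBorosMoll]
  by_cases hj : j ≤ n
  · have hpascal : ((j : ℝ) + 1) * (n + 1) * ((n + j + 2).choose (j + 1) : ℕ)
        = (n + j + 1) * (n + j + 2) * ((n + j).choose j : ℕ) := by
      have h1 := Nat.add_one_mul_choose_eq (n + j + 1) j
      have h2 := Nat.choose_mul_succ_eq (n + j) j
      rw [show n + j + 1 - j = n + 1 by omega] at h2
      rw [← Nat.cast_inj (R := ℝ)] at h1 h2
      push_cast at h1 h2 ⊢
      linear_combination -(↑n + 1) * h1 - (n + j + 2) * h2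
    rw [if_pos (by omega), if_pos hj, show 2 * (n + 1) - 2 * (j + 1) = 2 * n - 2 * j by omega,
      show n + 1 - (j + 1) = n - j by omega, show n + 1 + (j + 1) = n + j + 2 by omega, pow_succ]
    linear_combination 2 * 2 ^ j * ((2 * n - 2 * j).choose (n - j) : ℝ) * hpascal
  · rw [if_neg (by omega), if_neg hj, mul_zero, mul_zero]

theorem coeff_succ_shiftedBorosMoll (n j : ℕ) :
    ((j : ℝ) + 1) * (2 * n - 2 * j - 1) * (shiftedBorosMoll n).coeff (j + 1)
      = (n - j) * (n + j + 1) * (shiftedBorosMoll n).coeff j := by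
  rw [coeff_shiftedBorosMoll, coeff_shiftedBorosMoll]
  rcases Nat.lt_or_ge j n with hj | hj
  · obtain ⟨r, rfl⟩ : ∃ r, n = j + 1 + r := ⟨n - (j + 1), by omega⟩
    have hcentral := Nat.succ_mul_centralBinom_succ r
    have hchoose := Nat.add_one_mul_choose_eq (2 * j + 1 + r) j
    rw [Nat.centralBinom_eq_two_mul_choose, Nat.centralBinom_eq_two_mul_choose] at hcentral
    rw [if_pos (by omega), if_pos (by omega), show 2 * (j + 1 + r) - 2 * (j + 1) = 2 * r by omega,
      show j + 1 + r - (j + 1) = r by omega, show 2 * (j + 1 + r) - 2 * j = 2 * (r + 1) by omega,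
      show j + 1 + r - j = r + 1 by omega, show j + 1 + r + (j + 1) = 2 * j + 1 + r + 1 by omega,
      show j + 1 + r + j = 2 * j + 1 + r by omega, pow_succ]
    rw [← Nat.cast_inj (R := ℝ)] at hcentral hchoose
    push_cast at hcentral hchoose ⊢
    linear_combination -(2 ^ j * 2 * (2 * r + 1) * ((2 * r).choose r : ℝ)) * hchoose
      - 2 ^ j * (2 * j + 1 + r + 1) * ((2 * j + 1 + r).choose j : ℝ) * hcentral
  · rw [if_neg (by omega), mul_zero]
    split_ifs with hjn
    · rw [show j = n by omega, sub_self, zero_mul, zero_mul]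
    · rw [mul_zero]

theorem shiftedBorosMoll_succ (n : ℕ) :
    C ((n : ℝ) + 1) * shiftedBorosMoll (n + 1)
      = (C (4 * ((n : ℝ) + 1)) * X + C (2 * (2 * (n : ℝ) + 1))) * shiftedBorosMoll n
        + C 4 * X * (X - 1) * derivative (shiftedBorosMoll n) := by
  ext k
  simp only [mul_add, add_mul, mul_sub, sub_mul, mul_assoc, mul_one, one_mul, coeff_add,
    coeff_sub, coeff_C_mul, coeff_X_mul_derivative, coeff_X_mul_X_mul_derivative]
  cases k with
  | zero =>
    rw [coeff_X_mul_zero]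
    linear_combination coeff_zero_shiftedBorosMoll_succ n
  | succ j =>
    rw [coeff_X_mul]
    apply mul_left_cancel₀ (by positivity : (j : ℝ) + 1 ≠ 0)
    push_cast
    linear_combination coeff_succ_shiftedBorosMoll_succ n j - 2 * coeff_succ_shiftedBorosMoll n j

theorem shiftedBorosMoll_pred (m : ℕ) :
    C (4 * (16 * ((m : ℝ) + 1) ^ 2 - 1)) * shiftedBorosMoll m
      = C (2 * ((m : ℝ) + 1)) *
          ((C (6 * (m : ℝ) + 7) - C (2 * ((m : ℝ) + 1)) * X) * shiftedBorosMoll (m + 1)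
            + C 2 * (X - 1) * (X - C 2) * derivative (shiftedBorosMoll (m + 1))) := by
  ext k
  simp only [mul_add, add_mul, mul_sub, sub_mul, mul_assoc, mul_one, one_mul, X_mul_C, coeff_add,
    coeff_sub, coeff_C_mul, coeff_X_mul_derivative, coeff_X_mul_X_mul_derivative, coeff_derivative]
  cases k with
  | zero =>
    rw [coeff_X_mul_zero]
    have ha := coeff_succ_shiftedBorosMoll_succ m 0
    have hb := coeff_succ_shiftedBorosMoll (m + 1) 0
    push_cast at ha hb ⊢
    apply mul_left_cancel₀ (by positivity : ((m : ℝ) + 1) * (m + 2) ≠ 0)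
    linear_combination -2 * (16 * ((m : ℝ) + 1) ^ 2 - 1) * ha + 2 * (m + 1) * (6 * m + 7) * hb
  | succ j =>
    rw [coeff_X_mul]
    have ha := coeff_succ_shiftedBorosMoll_succ m (j + 1)
    have hb := coeff_succ_shiftedBorosMoll (m + 1) j
    have hb' := coeff_succ_shiftedBorosMoll (m + 1) (j + 1)
    push_cast at ha hb hb' ⊢
    apply mul_left_cancel₀ (by positivity : ((m : ℝ) + j + 2) * (m + j + 3) ≠ 0)
    linear_combination -2 * (16 * ((m : ℝ) + 1) ^ 2 - 1) * ha - 4 * (m + 1) * (m + j + 3) * hb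
      + 2 * (m + 1) * (6 * m + 2 * j + 9) * hb'

theorem derivative_shiftedBorosMoll_comp_X_add_one (n : ℕ) :
    (derivative (shiftedBorosMoll n)).comp (X + 1)
      = C ((4 : ℝ) ^ n) * derivative (borosMoll n) := by
  have h := derivative_comp (shiftedBorosMoll n) (X + 1)
  rwa [shiftedBorosMoll_comp_X_add_one, derivative_C_mul, derivative_add, derivative_X,
    derivative_one, add_zero, one_mul, eq_comm] at h

theorem borosMoll_succ (n : ℕ) :
    C (2 * ((n : ℝ) + 1)) * borosMoll (n + 1)
      = (C (2 * ((n : ℝ) + 1)) * X + C (4 * (n : ℝ) + 3)) * borosMoll n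
        + C 2 * X * (X + 1) * derivative (borosMoll n) := by
  have h := congrArg (fun p => p.comp (X + 1)) (shiftedBorosMoll_succ n)
  simp only [mul_comp, add_comp, sub_comp, C_comp, X_comp, one_comp,
    shiftedBorosMoll_comp_X_add_one, derivative_shiftedBorosMoll_comp_X_add_one] at h
  simp only [map_mul, map_add, map_natCast, map_ofNat, map_pow, map_one] at h ⊢
  apply mul_left_cancel₀ (pow_ne_zero (n + 1) (by norm_num) : (4 : ℝ[X]) ^ (n + 1) ≠ 0)
  linear_combination 2 * h

theorem borosMoll_pred (m : ℕ) :
    C (16 * ((m : ℝ) + 1) ^ 2 - 1) * borosMoll m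
      = C (2 * ((m : ℝ) + 1)) *
          ((C (4 * (m : ℝ) + 5) - C (2 * ((m : ℝ) + 1)) * X) * borosMoll (m + 1)
            + C 2 * X * (X - 1) * derivative (borosMoll (m + 1))) := by
  have h := congrArg (fun p => p.comp (X + 1)) (shiftedBorosMoll_pred m)
  simp only [mul_comp, add_comp, sub_comp, C_comp, X_comp, one_comp,
    shiftedBorosMoll_comp_X_add_one, derivative_shiftedBorosMoll_comp_X_add_one] at h
  simp only [map_mul, map_add, map_sub, map_natCast, map_ofNat, map_pow, map_one] at h ⊢
  apply mul_left_cancel₀ (pow_ne_zero (m + 1) (by norm_num) : (4 : ℝ[X]) ^ (m + 1) ≠ 0)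
  linear_combination h

-- `(X * p).coeff k` is the coefficient of `x^(k-1)` in `p`, and `0` when `k = 0`.
theorem coeff_borosMoll_succ (n k : ℕ) :
    2 * ((n : ℝ) + 1) * (borosMoll (n + 1)).coeff k
      = 2 * ((n : ℝ) + k) * (X * borosMoll n).coeff k
        + (4 * (n : ℝ) + 2 * k + 3) * (borosMoll n).coeff k := by
  have h := congrArg (coeff · k) (borosMoll_succ n)
  simp only [mul_add, add_mul, mul_assoc, mul_one, coeff_add, coeff_C_mul, coeff_X_mul_derivative,
    coeff_X_mul_X_mul_derivative] at h
  linear_combination h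

theorem coeff_borosMoll_pred (m k : ℕ) :
    (16 * ((m : ℝ) + 1) ^ 2 - 1) * (borosMoll m).coeff k
      = 2 * ((m : ℝ) + 1) * (4 * m + 5 - 2 * k) * (borosMoll (m + 1)).coeff k
        + 4 * ((m : ℝ) + 1) * (k - m - 2) * (X * borosMoll (m + 1)).coeff k := by
  have h := congrArg (coeff · k) (borosMoll_pred m)
  simp only [mul_add, add_mul, mul_sub, sub_mul, mul_assoc, mul_one, coeff_add, coeff_sub,
    coeff_C_mul, coeff_X_mul_derivative, coeff_X_mul_X_mul_derivative] at h
  linear_combination h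

theorem bmCoeff_natCast (k n : ℕ) : bmCoeff k n = (borosMoll n).coeff k := by
  simp [bmCoeff]

/-- For every `n ≥ 1` and every integer `0 ≤ i ≤ n`:
`d_i(n+1) = ((8n²+8n+3−4i²)/(2(n+1−i)(n+1)))·d_i(n)
 − ((n+i)(4n−1)(4n+1)/(4n(n+1)(n+1−i)))·d_i(n−1)`. -/
theorem bmCoeff_three_term_recurrence (n : ℕ) (hn : 1 ≤ n) (i : ℤ)
    (hi0 : 0 ≤ i) (hi1 : i ≤ (n : ℤ)) :
    bmCoeff i (n + 1) =
      (8 * (n : ℝ) ^ 2 + 8 * (n : ℝ) + 3 - 4 * (i : ℝ) ^ 2) /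
          (2 * ((n : ℝ) + 1 - (i : ℝ)) * ((n : ℝ) + 1)) * bmCoeff i n -
        ((n : ℝ) + (i : ℝ)) * (4 * (n : ℝ) - 1) * (4 * (n : ℝ) + 1) /
          (4 * (n : ℝ) * ((n : ℝ) + 1) * ((n : ℝ) + 1 - (i : ℝ))) * bmCoeff i (n - 1) := by
  lift i to ℕ using hi0
  obtain ⟨m, rfl⟩ : ∃ m, n = m + 1 := ⟨n - 1, by omega⟩
  have hi : (i : ℝ) ≤ m + 1 := by exact_mod_cast hi1
  have hforward := coeff_borosMoll_succ (m + 1) i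
  have hbackward := coeff_borosMoll_pred m i
  rw [Nat.add_sub_cancel, bmCoeff_natCast, bmCoeff_natCast, bmCoeff_natCast]
  push_cast at hforward ⊢
  have hgap : (m : ℝ) + 1 + 1 - i ≠ 0 := by linarith
  field_simp
  linear_combination 4 * (m + 1) * (m + 2 - i) * hforward + 2 * (m + 1 + i) * hbackward
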